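/- (Lemma 4.3) Let S be a finite spin space (with counting measure) and let Φ be a translation invariant, absolutely summable interaction potential on ℤ^d. If A ⊂ ℤ^d is a nonempty finite set such that Φ_A : Ω_A → ℝ is non-constant, then there exists a continuous map c : [0,∞) → (0,∞), independent of Λ, such that Var_{Λ,β}(Φ_A) ≥ c(β) for all β ≥ 0 and all finite Λ ⊂ ℤ^d containing A. -/

import Mathlib

/-!
Write the variance as `⟨(Φ_A - m)²⟩` with `m = ⟨Φ_A⟩`. A configuration change inside `A` moves
`H_Λ` by at most `D = 2 |A| ‖Φ‖`, because by translation invariance the interactions through a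
single site have total norm at most `‖Φ‖`. Splitting `Ω_Λ = Ω_A × Ω_{Λ∖A}`, every `σ ∈ Ω_A`
therefore has Gibbs marginal at least `e^{-βD} / |Ω_A|`, uniformly in `Λ`, so
`Var ≥ (Φ_A(σ) - m)² e^{-βD} / |Ω_A|` for each `σ`. Averaging this over two configurations
`ω₁, ω₂` with `Φ_A(ω₁) ≠ Φ_A(ω₂)` gives `c(β) = (Φ_A(ω₁) - Φ_A(ω₂))² e^{-βD} / (4 |Ω_A|)`.
-/

open Filter Topology

/-- The lattice `ℤ^d`. -/
abbrev Zd (d : ℕ) := Fin d → ℤ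

/-- The configuration space `Ω_Λ = S^Λ` for a finite `Λ ⊆ ℤ^d`. -/
abbrev Config (S : Type) {d : ℕ} (Λ : Finset (Zd d)) : Type := {x // x ∈ Λ} → S

/-- Restriction of a configuration on `Λ` to a subset `A ⊆ Λ`. -/
def restrictCfg {S : Type} {d : ℕ} {Λ A : Finset (Zd d)} (h : A ⊆ Λ) (ω : Config S Λ) :
    Config S A := fun a => ω ⟨a.1, h a.2⟩

/-- An interaction potential: a function `Φ_A : Ω_A → ℝ` for each finite `A ⊆ ℤ^d`. -/
abbrev Pot (d : ℕ) (S : Type) := (A : Finset (Zd d)) → Config S A → ℝ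

/-- The sup norm `‖Φ_A‖_∞`. -/
noncomputable def potNorm {d : ℕ} {S : Type} [Fintype S] [Nonempty S] (Φ : Pot d S)
    (A : Finset (Zd d)) : ℝ := ⨆ ω : Config S A, |Φ A ω|

/-- Translate of a finite set: `A + x`. -/
def shiftSet {d : ℕ} (x : Zd d) (A : Finset (Zd d)) : Finset (Zd d) := A.image (· + x)

/-- Translation invariance of a potential. -/
def TransInv {d : ℕ} {S : Type} (Φ : Pot d S) : Prop :=
  ∀ (x : Zd d) (A : Finset (Zd d)) (ω : Config S (shiftSet x A)),
    Φ (shiftSet x A) ω = Φ A (fun a => ω ⟨a.1 + x, Finset.mem_image_of_mem _ a.2⟩)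

/-- Absolute summability: `Σ_{A ∋ 0} ‖Φ_A‖ < ∞`. -/
def AbsSummable {d : ℕ} {S : Type} [Fintype S] [Nonempty S] (Φ : Pot d S) : Prop :=
  Summable (fun A : {A : Finset (Zd d) // (0 : Zd d) ∈ A} => potNorm Φ A.1)

/-- `‖Φ‖ = Σ_{A ∋ 0} ‖Φ_A‖`. -/
noncomputable def potFullNorm {d : ℕ} {S : Type} [Fintype S] [Nonempty S] (Φ : Pot d S) : ℝ :=
  ∑' A : {A : Finset (Zd d) // (0 : Zd d) ∈ A}, potNorm Φ A.1

/-- The Hamiltonian `H_Λ(ω) = Σ_{A ⊆ Λ} Φ_A(ω_A)`. -/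
noncomputable def Ham {d : ℕ} {S : Type} (Φ : Pot d S) (Λ : Finset (Zd d))
    (ω : Config S Λ) : ℝ :=
  ∑ A ∈ Λ.powerset.attach, Φ A.1 (restrictCfg (Finset.mem_powerset.mp A.2) ω)

/-- The hypercube `Λ_n = [-n, n]^d ∩ ℤ^d`. -/
noncomputable def cube (d n : ℕ) : Finset (Zd d) := Fintype.piFinset fun _ => Finset.Icc (-(n : ℤ)) n

/-- Energy per site `h_n(ω) = H_n(ω)/|Λ_n|`. -/
noncomputable def enDensity {d : ℕ} {S : Type} (Φ : Pot d S) (n : ℕ)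
    (ω : Config S (cube d n)) : ℝ := Ham Φ (cube d n) ω / (cube d n).card

/-- `𝕄_n(B) = #{ω ∈ Ω_n : h_n(ω) ∈ B}`. -/
noncomputable def Mcount {d : ℕ} {S : Type} [Fintype S] (Φ : Pot d S) (n : ℕ)
    (B : Set ℝ) : ℕ := Nat.card {ω : Config S (cube d n) // enDensity Φ n ω ∈ B}

/-- The sequence `(1/|Λ_n|) log 𝕄_n(B)`, with the convention `log 0 = -∞`. -/
noncomputable def mSeq {d : ℕ} {S : Type} [Fintype S] (Φ : Pot d S) (B : Set ℝ)
    (n : ℕ) : EReal :=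
  if Mcount Φ n B = 0 then ⊥
  else ((Real.log (Mcount Φ n B) / (cube d n).card : ℝ) : EReal)

/-- `m(B) = lim_n (1/|Λ_n|) log 𝕄_n(B)` (defined via `limsup`; the content that this is
an actual limit is asserted in the theorems). -/
noncomputable def mFun {d : ℕ} {S : Type} [Fintype S] (Φ : Pot d S) (B : Set ℝ) : EReal :=
  Filter.limsup (mSeq Φ B) Filter.atTop

/-- The microcanonical entropy `s(u) = lim_{r→0⁺} m((u-r, u+r))` (defined via `limsup`). -/
noncomputable def entropy {d : ℕ} {S : Type} [Fintype S] (Φ : Pot d S) (u : ℝ) : EReal :=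
  Filter.limsup (fun r : ℝ => mFun Φ (Set.Ioo (u - r) (u + r))) (nhdsWithin 0 (Set.Ioi 0))

/-- The partition function `Z_{Λ,β}`. -/
noncomputable def Zfun {d : ℕ} {S : Type} [Fintype S] (Φ : Pot d S) (Λ : Finset (Zd d))
    (β : ℝ) : ℝ := ∑ ω : Config S Λ, Real.exp (-β * Ham Φ Λ ω)

/-- The finite-volume pressure `ψ_Λ(β) = -(1/|Λ|) log Z_{Λ,β}`. -/
noncomputable def pressureFin {d : ℕ} {S : Type} [Fintype S] (Φ : Pot d S)
    (Λ : Finset (Zd d)) (β : ℝ) : ℝ := -Real.log (Zfun Φ Λ β) / Λ.card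

/-- The pressure sequence `-(1/|Λ_n|) log Z_{Λ_n,β}`. -/
noncomputable def pressureSeq {d : ℕ} {S : Type} [Fintype S] (Φ : Pot d S) (β : ℝ)
    (n : ℕ) : ℝ := pressureFin Φ (cube d n) β

/-- Gibbs expectation `⟨f⟩_{Λ,β}`. -/
noncomputable def gibbsExp {d : ℕ} {S : Type} [Fintype S] (Φ : Pot d S)
    (Λ : Finset (Zd d)) (β : ℝ) (f : Config S Λ → ℝ) : ℝ :=
  (∑ ω : Config S Λ, f ω * Real.exp (-β * Ham Φ Λ ω)) / Zfun Φ Λ β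

/-- Gibbs variance `Var_{Λ,β}(f)`. -/
noncomputable def gibbsVar {d : ℕ} {S : Type} [Fintype S] (Φ : Pot d S)
    (Λ : Finset (Zd d)) (β : ℝ) (f : Config S Λ → ℝ) : ℝ :=
  gibbsExp Φ Λ β (fun ω => (f ω) ^ 2) - (gibbsExp Φ Λ β f) ^ 2

/-- Gibbs covariance `Cov_{Λ,β}(f,g)`. -/
noncomputable def gibbsCov {d : ℕ} {S : Type} [Fintype S] (Φ : Pot d S)
    (Λ : Finset (Zd d)) (β : ℝ) (f g : Config S Λ → ℝ) : ℝ :=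
  gibbsExp Φ Λ β (fun ω => f ω * g ω) - gibbsExp Φ Λ β f * gibbsExp Φ Λ β g

/-- Gibbs probability `μ_{Λ,β}(E)`. -/
noncomputable def gibbsProb {d : ℕ} {S : Type} [Fintype S] (Φ : Pot d S)
    (Λ : Finset (Zd d)) (β : ℝ) (E : Set (Config S Λ)) : ℝ :=
  (∑ ω : Config S Λ, E.indicator (fun ω => Real.exp (-β * Ham Φ Λ ω)) ω) / Zfun Φ Λ β

/-- Positive correlation of the potential. -/
def PosCorr {d : ℕ} {S : Type} [Fintype S] (Φ : Pot d S) : Prop :=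
  ∀ (Λ A B : Finset (Zd d)) (hA : A ⊆ Λ) (hB : B ⊆ Λ) (β : ℝ), 0 < β →
    0 ≤ gibbsCov Φ Λ β (fun ω => Φ A (restrictCfg hA ω)) (fun ω => Φ B (restrictCfg hB ω))

/-- `#M_n(u) = #{ω ∈ Ω_n : H_n(ω) ≤ |Λ_n| u}`. -/
noncomputable def MvolCount {d : ℕ} {S : Type} [Fintype S] (Φ : Pot d S) (n : ℕ)
    (u : ℝ) : ℕ :=
  Nat.card {ω : Config S (cube d n) // Ham Φ (cube d n) ω ≤ (cube d n).card * u}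

/-- The sequence `(1/|Λ_n|) log #M_n(u)`, with the convention `log 0 = -∞`. -/
noncomputable def sigmaSeq {d : ℕ} {S : Type} [Fintype S] (Φ : Pot d S) (u : ℝ)
    (n : ℕ) : EReal :=
  if MvolCount Φ n u = 0 then ⊥
  else ((Real.log (MvolCount Φ n u) / (cube d n).card : ℝ) : EReal)

/-- `σ(u) = lim_n (1/|Λ_n|) log #M_n(u)` (defined via `limsup`). -/
noncomputable def sigmaFun {d : ℕ} {S : Type} [Fintype S] (Φ : Pot d S) (u : ℝ) : EReal :=
  Filter.limsup (sigmaSeq Φ u) Filter.atTop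

section Potential

variable {d : ℕ} {S : Type} [Fintype S] [Nonempty S] (Φ : Pot d S)

lemma potNorm_nonneg (B : Finset (Zd d)) : 0 ≤ potNorm Φ B :=
  Real.iSup_nonneg fun _ => abs_nonneg _

lemma abs_le_potNorm {B : Finset (Zd d)} (ω : Config S B) : |Φ B ω| ≤ potNorm Φ B :=
  le_ciSup (f := fun ω => |Φ B ω|) (Set.finite_range _).bddAbove ω

lemma potNorm_shiftSet (hTI : TransInv Φ) (x : Zd d) (B : Finset (Zd d)) :
    potNorm Φ (shiftSet x B) = potNorm Φ B := by
  have hsurj : Function.Surjective fun (ω : Config S (shiftSet x B)) (b : {b // b ∈ B}) =>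
      ω ⟨b.1 + x, Finset.mem_image_of_mem _ b.2⟩ := by
    intro τ
    refine ⟨fun b' => τ ⟨b'.1 - x, ?_⟩, funext fun b => by simp⟩
    obtain ⟨b, hb, hbx⟩ := Finset.mem_image.mp b'.2
    simpa [← hbx] using hb
  simp only [potNorm, hTI x B]
  exact hsurj.iSup_comp fun τ => |Φ B τ|

lemma shiftSet_injective (x : Zd d) : Function.Injective (shiftSet x) :=
  Finset.image_injective (add_left_injective x)

variable {Φ}

lemma sum_potNorm_le_potFullNorm (hAS : AbsSummable Φ) (T : Finset (Finset (Zd d)))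
    (hT : ∀ C ∈ T, (0 : Zd d) ∈ C) : ∑ C ∈ T, potNorm Φ C ≤ potFullNorm Φ := by
  rw [← Finset.sum_subtype_of_mem _ hT]
  exact hAS.sum_le_tsum _ fun C _ => potNorm_nonneg Φ C.1

lemma sum_potNorm_filter_mem_le (hTI : TransInv Φ) (hAS : AbsSummable Φ)
    (T : Finset (Finset (Zd d))) (x : Zd d) :
    ∑ B ∈ T with x ∈ B, potNorm Φ B ≤ potFullNorm Φ := by
  calc ∑ B ∈ T with x ∈ B, potNorm Φ B
      = ∑ B ∈ T with x ∈ B, potNorm Φ (shiftSet (-x) B) :=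
        Finset.sum_congr rfl fun B _ => (potNorm_shiftSet Φ hTI (-x) B).symm
    _ = ∑ C ∈ (T.filter (x ∈ ·)).image (shiftSet (-x)), potNorm Φ C :=
        (Finset.sum_image fun B _ B' _ h => shiftSet_injective (-x) h).symm
    _ ≤ potFullNorm Φ := by
        refine sum_potNorm_le_potFullNorm hAS _ fun C hC => ?_
        obtain ⟨B, hB, rfl⟩ := Finset.mem_image.mp hC
        exact Finset.mem_image.mpr ⟨x, (Finset.mem_filter.mp hB).2, by simp⟩

end Potential

section Hamiltonian

variable {d : ℕ} {S : Type} [Fintype S] [Nonempty S] {Φ : Pot d S}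

lemma abs_sub_le_sum_potNorm_of_eqOn {Λ A B : Finset (Zd d)} (hB : B ⊆ Λ)
    {ω ω' : Config S Λ} (h : ∀ x : {x // x ∈ Λ}, x.1 ∉ A → ω x = ω' x) :
    |Φ B (restrictCfg hB ω) - Φ B (restrictCfg hB ω')| ≤
      ∑ x ∈ A, if x ∈ B then 2 * potNorm Φ B else 0 := by
  have hnonneg : ∀ x ∈ A, 0 ≤ if x ∈ B then 2 * potNorm Φ B else 0 := fun x _ => by
    split_ifs <;> linarith [potNorm_nonneg Φ B]
  by_cases hAB : ∃ x ∈ A, x ∈ B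
  · obtain ⟨x, hxA, hxB⟩ := hAB
    calc |Φ B (restrictCfg hB ω) - Φ B (restrictCfg hB ω')|
        ≤ |Φ B (restrictCfg hB ω)| + |Φ B (restrictCfg hB ω')| := abs_sub _ _
      _ ≤ 2 * potNorm Φ B := by
        linarith [abs_le_potNorm Φ (restrictCfg hB ω), abs_le_potNorm Φ (restrictCfg hB ω')]
      _ = if x ∈ B then 2 * potNorm Φ B else 0 := (if_pos hxB).symm
      _ ≤ _ := Finset.single_le_sum hnonneg hxA
  · have hres : restrictCfg hB ω = restrictCfg hB ω' :=
      funext fun b => h _ fun hbA => hAB ⟨b.1, hbA, b.2⟩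
    rw [hres, sub_self, abs_zero]
    exact Finset.sum_nonneg hnonneg

lemma abs_Ham_sub_le_of_eqOn (hTI : TransInv Φ) (hAS : AbsSummable Φ) {Λ A : Finset (Zd d)}
    {ω ω' : Config S Λ} (h : ∀ x : {x // x ∈ Λ}, x.1 ∉ A → ω x = ω' x) :
    |Ham Φ Λ ω - Ham Φ Λ ω'| ≤ 2 * (A.card * potFullNorm Φ) := by
  calc |Ham Φ Λ ω - Ham Φ Λ ω'|
      ≤ ∑ B ∈ Λ.powerset.attach, |Φ B.1 (restrictCfg (Finset.mem_powerset.mp B.2) ω) -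
          Φ B.1 (restrictCfg (Finset.mem_powerset.mp B.2) ω')| := by
        rw [Ham, Ham, ← Finset.sum_sub_distrib]
        exact Finset.abs_sum_le_sum_abs _ _
    _ ≤ ∑ B ∈ Λ.powerset.attach, ∑ x ∈ A, if x ∈ B.1 then 2 * potNorm Φ B.1 else 0 :=
        Finset.sum_le_sum fun B _ => abs_sub_le_sum_potNorm_of_eqOn _ h
    _ = ∑ x ∈ A, 2 * ∑ B ∈ Λ.powerset with x ∈ B, potNorm Φ B := by
        rw [Finset.sum_comm]
        refine Finset.sum_congr rfl fun x _ => ?_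
        rw [Finset.sum_attach Λ.powerset fun B => if x ∈ B then 2 * potNorm Φ B else 0,
          Finset.mul_sum, Finset.sum_filter]
    _ ≤ ∑ _x ∈ A, 2 * potFullNorm Φ :=
        Finset.sum_le_sum fun x _ => by
          linarith [sum_potNorm_filter_mem_le hTI hAS Λ.powerset x]
    _ = 2 * (A.card * potFullNorm Φ) := by
        rw [Finset.sum_const, nsmul_eq_mul]
        ring

end Hamiltonian

section Gibbs

variable {d : ℕ} {S : Type}

def glueEquiv {Λ A : Finset (Zd d)} (hAΛ : A ⊆ Λ) :
    Config S A × Config S (Λ \ A) ≃ Config S Λ where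
  toFun p x := if hx : x.1 ∈ A then p.1 ⟨x.1, hx⟩ else p.2 ⟨x.1, Finset.mem_sdiff.mpr ⟨x.2, hx⟩⟩
  invFun ω := (restrictCfg hAΛ ω, restrictCfg Finset.sdiff_subset ω)
  left_inv p := by
    refine Prod.ext (funext fun a => ?_) (funext fun b => ?_)
    · simp [restrictCfg, a.2]
    · simp [restrictCfg, (Finset.mem_sdiff.mp b.2).2]
  right_inv ω := funext fun x => by
    by_cases hx : x.1 ∈ A <;> simp [restrictCfg, hx]

lemma restrictCfg_glueEquiv {Λ A : Finset (Zd d)} (hAΛ : A ⊆ Λ) (σ : Config S A)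
    (η : Config S (Λ \ A)) : restrictCfg hAΛ (glueEquiv hAΛ (σ, η)) = σ :=
  congrArg Prod.fst ((glueEquiv hAΛ).symm_apply_apply (σ, η))

lemma glueEquiv_apply_of_notMem {Λ A : Finset (Zd d)} (hAΛ : A ⊆ Λ) (σ σ' : Config S A)
    (η : Config S (Λ \ A)) (x : {x // x ∈ Λ}) (hx : x.1 ∉ A) :
    glueEquiv hAΛ (σ, η) x = glueEquiv hAΛ (σ', η) x := by
  simp [glueEquiv, hx]

variable [Fintype S] [Nonempty S] (Φ : Pot d S) (Λ : Finset (Zd d)) (β : ℝ)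

lemma Zfun_pos : 0 < Zfun Φ Λ β :=
  Finset.sum_pos (fun _ _ => Real.exp_pos _) Finset.univ_nonempty

lemma gibbsVar_eq_gibbsExp_sq_sub (f : Config S Λ → ℝ) :
    gibbsVar Φ Λ β f = gibbsExp Φ Λ β fun ω => (f ω - gibbsExp Φ Λ β f) ^ 2 := by
  set m := gibbsExp Φ Λ β f
  have hZ := (Zfun_pos Φ Λ β).ne'
  have hm : ∑ ω, f ω * Real.exp (-β * Ham Φ Λ ω) = m * Zfun Φ Λ β := by
    simp only [m, gibbsExp]; field_simp
  have hexpand : ∑ ω, (f ω - m) ^ 2 * Real.exp (-β * Ham Φ Λ ω) =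
      ∑ ω, f ω ^ 2 * Real.exp (-β * Ham Φ Λ ω) - 2 * m * (m * Zfun Φ Λ β) +
        m ^ 2 * Zfun Φ Λ β := by
    rw [← hm, Zfun, Finset.mul_sum, Finset.mul_sum, ← Finset.sum_sub_distrib,
      ← Finset.sum_add_distrib]
    exact Finset.sum_congr rfl fun ω _ => by ring
  change gibbsExp Φ Λ β (fun ω => f ω ^ 2) - m ^ 2 =
    (∑ ω, (f ω - m) ^ 2 * Real.exp (-β * Ham Φ Λ ω)) / Zfun Φ Λ β
  rw [hexpand, gibbsExp]
  field_simp
  ring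

end Gibbs

section Variance

variable {d : ℕ} {S : Type} [Fintype S] {Φ : Pot d S} {Λ A : Finset (Zd d)}
  {β D : ℝ}

lemma Zfun_le_mul_sum_glueEquiv (hβ : 0 ≤ β) (hAΛ : A ⊆ Λ)
    (hD : ∀ σ σ' η, Ham Φ Λ (glueEquiv hAΛ (σ, η)) - Ham Φ Λ (glueEquiv hAΛ (σ', η)) ≤ D)
    (σ₀ : Config S A) :
    Zfun Φ Λ β ≤ Fintype.card (Config S A) * Real.exp (β * D) *
      ∑ η, Real.exp (-β * Ham Φ Λ (glueEquiv hAΛ (σ₀, η))) := by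
  have hweight : ∀ σ η, Real.exp (-β * Ham Φ Λ (glueEquiv hAΛ (σ, η))) ≤
      Real.exp (β * D) * Real.exp (-β * Ham Φ Λ (glueEquiv hAΛ (σ₀, η))) := fun σ η => by
    rw [← Real.exp_add, Real.exp_le_exp]
    nlinarith [hD σ₀ σ η]
  calc Zfun Φ Λ β
      = ∑ σ, ∑ η, Real.exp (-β * Ham Φ Λ (glueEquiv hAΛ (σ, η))) := by
        rw [Zfun, ← (glueEquiv hAΛ).sum_comp, Fintype.sum_prod_type]
    _ ≤ ∑ _σ : Config S A, ∑ η, Real.exp (β * D) *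
          Real.exp (-β * Ham Φ Λ (glueEquiv hAΛ (σ₀, η))) :=
        Finset.sum_le_sum fun σ _ => Finset.sum_le_sum fun η _ => hweight σ η
    _ = _ := by
        rw [Finset.sum_const, Finset.card_univ, nsmul_eq_mul, ← Finset.mul_sum, mul_assoc]

variable [Nonempty S]

lemma sq_sub_gibbsExp_mul_le_gibbsVar (hβ : 0 ≤ β) (hAΛ : A ⊆ Λ)
    (hD : ∀ σ σ' η, Ham Φ Λ (glueEquiv hAΛ (σ, η)) - Ham Φ Λ (glueEquiv hAΛ (σ', η)) ≤ D)
    (f : Config S A → ℝ) (σ₀ : Config S A) :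
    (f σ₀ - gibbsExp Φ Λ β (fun ω => f (restrictCfg hAΛ ω))) ^ 2 *
        (Real.exp (-β * D) / Fintype.card (Config S A)) ≤
      gibbsVar Φ Λ β (fun ω => f (restrictCfg hAΛ ω)) := by
  set m := gibbsExp Φ Λ β (fun ω => f (restrictCfg hAΛ ω))
  set w : Config S Λ → ℝ := fun ω => Real.exp (-β * Ham Φ Λ ω)
  have hZ := Zfun_pos Φ Λ β
  have hN : (0 : ℝ) < Fintype.card (Config S A) := by exact_mod_cast Fintype.card_pos
  have hsum : (f σ₀ - m) ^ 2 * ∑ η, w (glueEquiv hAΛ (σ₀, η)) ≤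
      ∑ ω, (f (restrictCfg hAΛ ω) - m) ^ 2 * w ω := by
    rw [← (glueEquiv hAΛ).sum_comp, Fintype.sum_prod_type, Finset.mul_sum]
    simp only [restrictCfg_glueEquiv]
    exact Finset.single_le_sum (f := fun σ => ∑ η, (f σ - m) ^ 2 * w (glueEquiv hAΛ (σ, η)))
      (fun σ _ => Finset.sum_nonneg fun η _ => by positivity) (Finset.mem_univ σ₀)
  rw [gibbsVar_eq_gibbsExp_sq_sub, gibbsExp, le_div_iff₀ hZ]
  refine le_trans ?_ hsum
  have hmass : Real.exp (-β * D) / Fintype.card (Config S A) * Zfun Φ Λ β ≤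
      ∑ η, w (glueEquiv hAΛ (σ₀, η)) := by
    rw [div_mul_eq_mul_div, div_le_iff₀ hN]
    calc Real.exp (-β * D) * Zfun Φ Λ β
        ≤ Real.exp (-β * D) * (Fintype.card (Config S A) * Real.exp (β * D) *
            ∑ η, w (glueEquiv hAΛ (σ₀, η))) :=
          mul_le_mul_of_nonneg_left (Zfun_le_mul_sum_glueEquiv hβ hAΛ hD σ₀) (Real.exp_pos _).le
      _ = _ := by
        rw [show -β * D = -(β * D) by ring, Real.exp_neg]
        field_simp
  rw [mul_assoc]
  exact mul_le_mul_of_nonneg_left hmass (sq_nonneg _)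

lemma sq_sub_div_four_mul_le_gibbsVar (hβ : 0 ≤ β) (hAΛ : A ⊆ Λ)
    (hD : ∀ σ σ' η, Ham Φ Λ (glueEquiv hAΛ (σ, η)) - Ham Φ Λ (glueEquiv hAΛ (σ', η)) ≤ D)
    (f : Config S A → ℝ) (σ₁ σ₂ : Config S A) :
    (f σ₁ - f σ₂) ^ 2 / 4 * (Real.exp (-β * D) / Fintype.card (Config S A)) ≤
      gibbsVar Φ Λ β (fun ω => f (restrictCfg hAΛ ω)) := by
  set m := gibbsExp Φ Λ β (fun ω => f (restrictCfg hAΛ ω))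
  have h₁ := sq_sub_gibbsExp_mul_le_gibbsVar hβ hAΛ hD f σ₁
  have h₂ := sq_sub_gibbsExp_mul_le_gibbsVar hβ hAΛ hD f σ₂
  have hparallelogram : (f σ₁ - f σ₂) ^ 2 / 4 ≤ ((f σ₁ - m) ^ 2 + (f σ₂ - m) ^ 2) / 2 := by
    nlinarith [sq_nonneg (f σ₁ + f σ₂ - 2 * m)]
  have hc : 0 ≤ Real.exp (-β * D) / Fintype.card (Config S A) := by positivity
  nlinarith [mul_le_mul_of_nonneg_right hparallelogram hc]

end Variance

theorem lemma43_general {d : ℕ} {S : Type} [Fintype S] [Nonempty S]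
    (Φ : Pot d S) (hTI : TransInv Φ) (hAS : AbsSummable Φ)
    (A : Finset (Zd d))
    (hnc : ∃ ω₁ ω₂ : Config S A, Φ A ω₁ ≠ Φ A ω₂) :
    ∃ c : ℝ → ℝ, ContinuousOn c (Set.Ici 0) ∧ (∀ β ∈ Set.Ici (0 : ℝ), 0 < c β) ∧
      ∀ (β : ℝ), 0 ≤ β → ∀ (Λ : Finset (Zd d)) (hAΛ : A ⊆ Λ),
        c β ≤ gibbsVar Φ Λ β (fun ω => Φ A (restrictCfg hAΛ ω)) := by
  obtain ⟨ω₁, ω₂, hne⟩ := hnc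
  set D := 2 * (A.card * potFullNorm Φ)
  refine ⟨fun β => (Φ A ω₁ - Φ A ω₂) ^ 2 / 4 *
    (Real.exp (-β * D) / Fintype.card (Config S A)), by fun_prop, fun β _ => ?_, ?_⟩
  · positivity [sub_ne_zero.mpr hne]
  · intro β hβ Λ hAΛ
    refine sq_sub_div_four_mul_le_gibbsVar hβ hAΛ (fun σ σ' η => ?_) _ ω₁ ω₂
    refine le_of_abs_le (abs_Ham_sub_le_of_eqOn hTI hAS fun x hx => ?_)
    exact glueEquiv_apply_of_notMem hAΛ σ σ' η x hx

/-- **Lemma 4.3**: if `Φ_A` is non-constant, then there is a continuous map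
`c : [0,∞) → (0,∞)`, independent of `Λ`, such that `Var_{Λ,β}(Φ_A) ≥ c(β)` for all
`β ≥ 0` and all finite `Λ ⊇ A`. -/
theorem lemma43 {d : ℕ} (hd : 0 < d) {S : Type} [Fintype S] [Nonempty S]
    (Φ : Pot d S) (hTI : TransInv Φ) (hAS : AbsSummable Φ)
    (hΦ0 : ∀ ω : Config S (∅ : Finset (Zd d)), Φ ∅ ω = 0)
    (A : Finset (Zd d)) (hA : A.Nonempty)
    (hnc : ∃ ω₁ ω₂ : Config S A, Φ A ω₁ ≠ Φ A ω₂) :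
    ∃ c : ℝ → ℝ, ContinuousOn c (Set.Ici 0) ∧ (∀ β ∈ Set.Ici (0 : ℝ), 0 < c β) ∧
      ∀ (β : ℝ), 0 ≤ β → ∀ (Λ : Finset (Zd d)) (hAΛ : A ⊆ Λ),
        c β ≤ gibbsVar Φ Λ β (fun ω => Φ A (restrictCfg hAΛ ω)) :=
  lemma43_general Φ hTI hAS A hnc
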